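/- arXiv:1812.11545 — 2 statements merged into one kernel-verified Lean document; each statement's English description precedes it below -/
import Mathlib

section
/- The meromorphic function w(z) = 1/(e^z + 1) satisfies the equation w'(z) = w(z)·( (w(z)² + (2e/(1−e))·w(z) − e/(1−e)) / (w(z) + e/(1−e)) − w(z+1) ) at every z ∈ ℂ where e^z + 1 ≠ 0 and w(z) + e/(1−e) ≠ 0. -/
/-!
With `X = exp z`, the function `w = 1/(X + 1)` solves the logistic equation `w' = w (w - 1)`, and
the shift `z ↦ z + 1` multiplies `X` by `e`, which turns into the Möbius relation
`w (z + 1) = w / ((1 - e) w + e)`. Substituting both into the equation leaves a rational identity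
in `w` alone.
-/

open Complex

theorem hasDerivAt_one_div_exp_add_one {z : ℂ} (hz : exp z + 1 ≠ 0) :
    HasDerivAt (fun z => 1 / (exp z + 1))
      (1 / (exp z + 1) * (1 / (exp z + 1) - 1)) z := by
  refine ((hasDerivAt_const z 1).div ((hasDerivAt_exp z).add_const 1) hz).congr_deriv ?_
  field_simp
  ring

theorem one_div_exp_add_add_one (z s : ℂ) (hz : exp z + 1 ≠ 0) :
    1 / (exp (z + s) + 1) =
      1 / (exp z + 1) / ((1 - exp s) * (1 / (exp z + 1)) + exp s) := by
  have hden : (1 - exp s) * (1 / (exp z + 1)) + exp s = (exp s * exp z + 1) / (exp z + 1) := by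
    field_simp
    ring
  rw [hden, exp_add, div_div_div_cancel_right₀ hz, mul_comm]

theorem sub_one_eq_div_sub_div {K : Type*} [Field K] {q v : K} (hq : 1 - q ≠ 0) (hv : v + q / (1 - q) ≠ 0) :
    v - 1 = (v ^ 2 + 2 * q / (1 - q) * v - q / (1 - q)) / (v + q / (1 - q))
      - v / ((1 - q) * v + q) := by
  have hv' : (1 - q) * v + q ≠ 0 := by
    contrapose! hv
    field_simp
    linear_combination hv
  rw [div_sub_div _ _ hv hv', eq_div_iff (mul_ne_zero hv hv')]
  field_simp
  ring

theorem stmt3 (w : ℂ → ℂ) (e : ℝ) (he : e = Real.exp 1)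
    (hw : ∀ z : ℂ, w z = 1 / (Complex.exp z + 1)) :
    ∀ z : ℂ, Complex.exp z + 1 ≠ 0 → w z + (e : ℂ) / (1 - e) ≠ 0 →
      deriv w z = w z *
        ((w z ^ 2 + (2 * e / (1 - e)) * w z - (e : ℂ) / (1 - e)) / (w z + (e : ℂ) / (1 - e))
          - w (z + 1)) := by
  intro z hz hwz
  have hderiv : HasDerivAt w (w z * (w z - 1)) z := by
    rw [funext hw]
    exact hasDerivAt_one_div_exp_add_one hz
  have he_exp : (e : ℂ) = exp 1 := by rw [he, ofReal_exp, ofReal_one]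
  have he_ne_one : (1 : ℂ) - e ≠ 0 := by
    have : 1 < e := he ▸ Real.one_lt_exp_iff.mpr one_pos
    exact_mod_cast sub_ne_zero.mpr this.ne
  rw [hderiv.deriv, hw (z + 1), one_div_exp_add_add_one z 1 hz, ← hw z, ← he_exp,
    ← sub_one_eq_div_sub_div he_ne_one hwz]
end

section
/- Let a, b : ℂ → ℂ with b not identically zero, c ∈ ℂ nonzero, and suppose w(z) = e^{g(z)} with g entire satisfies w'(z) = w(z)·[a(z) + b(z)·w(z−c)] on ℂ, where a and b are polynomials. Then b ≡ 0, a contradiction; i.e., no nonvanishing entire function of the form e^g with g entire solves the equation when a, b are polynomials with b ≠ 0. -/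
open Polynomial

theorem stmt11 (a b g : Polynomial ℂ) (hb : b ≠ 0) (c : ℂ) (hc : c ≠ 0)
    (hg : 1 ≤ g.degree) (w : ℂ → ℂ)
    (hw : ∀ z : ℂ, w z = Complex.exp (g.eval z)) :
    ¬ ∀ z : ℂ, deriv w z = w z * (a.eval z + b.eval z * w (z - c)) := by
  intro h
  set P : Polynomial ℂ := g.derivative - a with hP
  set Q : Polynomial ℂ := b with hQ
  set G : Polynomial ℂ := g.comp (X - C c) with hG
  have hwfun : w = fun z => Complex.exp (g.eval z) := funext hw
  have hderiv : ∀ z : ℂ, deriv w z = g.derivative.eval z * Complex.exp (g.eval z) := by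
    intro z
    rw [hwfun]
    have : HasDerivAt (fun z => Complex.exp (g.eval z))
        (Complex.exp (g.eval z) * g.derivative.eval z) z :=
      (g.hasDerivAt z).cexp
    rw [this.deriv]; ring
  have hGeval : ∀ z : ℂ, G.eval z = g.eval (z - c) := by
    intro z; simp [hG, eval_comp]
  have hkey : ∀ z : ℂ, P.eval z = Q.eval z * Complex.exp (G.eval z) := by
    intro z
    have h1 := h z
    rw [hderiv z, hw z, hw (z - c)] at h1
    have hexp : Complex.exp (g.eval z) ≠ 0 := Complex.exp_ne_zero _
    have h2 : g.derivative.eval z = a.eval z + b.eval z * Complex.exp (g.eval (z - c)) := by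
      apply mul_left_cancel₀ hexp
      linear_combination h1
    simp only [hP, hQ, eval_sub, hGeval]
    linear_combination h2
  -- differentiate hkey
  have hkey' : ∀ z : ℂ, P.derivative.eval z =
      (Q.derivative + Q * G.derivative).eval z * Complex.exp (G.eval z) := by
    intro z
    have hR : HasDerivAt (fun z => Q.eval z * Complex.exp (G.eval z))
        (Q.derivative.eval z * Complex.exp (G.eval z)
          + Q.eval z * (Complex.exp (G.eval z) * G.derivative.eval z)) z :=
      (Q.hasDerivAt z).mul ((G.hasDerivAt z).cexp)
    have hfun : (fun z => Q.eval z * Complex.exp (G.eval z)) = fun z => P.eval z := by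
      funext z; rw [hkey z]
    rw [hfun] at hR
    have := hR.unique (P.hasDerivAt z)
    rw [← this]
    simp only [eval_add, eval_mul]
    ring
  have hpoly : P.derivative * Q = P * (Q.derivative + Q * G.derivative) := by
    apply Polynomial.funext
    intro z
    simp only [eval_mul]
    rw [hkey' z, hkey z]
    ring
  -- facts about degrees
  have hgne : g ≠ 0 := by
    intro h0; rw [h0] at hg; simp at hg
  have hQne : Q ≠ 0 := hb
  have hgnat : 0 < g.natDegree := natDegree_pos_iff_degree_pos.mpr
    (lt_of_lt_of_le (by norm_num) hg)
  have hGnat : 0 < G.natDegree := by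
    rw [hG, natDegree_comp, natDegree_X_sub_C, mul_one]; exact hgnat
  have hG' : G.derivative ≠ 0 := by
    intro h0
    have := natDegree_eq_zero_of_derivative_eq_zero h0
    omega
  have hG'deg : (0 : WithBot ℕ) ≤ G.derivative.degree := zero_le_degree_iff.mpr hG'
  by_cases hPne : P = 0
  · -- then b ≡ 0, contradiction
    apply hb
    apply Polynomial.funext
    intro z
    have := hkey z
    rw [hPne] at this
    simp only [eval_zero] at this ⊢
    rcases mul_eq_zero.mp this.symm with h1 | h1
    · exact h1
    · exact absurd h1 (Complex.exp_ne_zero _)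
  · -- degree contradiction
    have hQbot : Q.degree ≠ ⊥ := by rwa [Ne, degree_eq_bot]
    have e2 : (Q.derivative + Q * G.derivative).degree = Q.degree + G.derivative.degree := by
      rw [degree_add_eq_right_of_degree_lt, degree_mul]
      calc Q.derivative.degree < Q.degree := degree_derivative_lt hQne
        _ ≤ Q.degree + G.derivative.degree := le_add_of_nonneg_right hG'deg
        _ = (Q * G.derivative).degree := (degree_mul).symm
    have hdeq : P.derivative.degree + Q.degree
        = P.degree + (Q.degree + G.derivative.degree) := by
      rw [← degree_mul, hpoly, degree_mul, e2]
    have hlt : P.derivative.degree + Q.degree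
        < P.degree + (Q.degree + G.derivative.degree) := by
      have h1 : P.derivative.degree < P.degree + G.derivative.degree :=
        lt_of_lt_of_le (degree_derivative_lt hPne) (le_add_of_nonneg_right hG'deg)
      calc P.derivative.degree + Q.degree
          < (P.degree + G.derivative.degree) + Q.degree :=
            WithBot.add_lt_add_right hQbot h1
        _ = P.degree + (Q.degree + G.derivative.degree) := by
            rw [add_assoc, add_comm G.derivative.degree]
    exact absurd hdeq (ne_of_lt hlt)
end
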